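/- arXiv:2604.05054 — 3 statements merged into one kernel-verified Lean document; each statement's English description precedes it below -/
import Mathlib

section
/- Let T > 0, let m ≥ 1 be a positive integer, let c > 0, and let θ : [0,T] → [0,∞) be a continuous non-increasing function such that θ(t₁)^{2m−1} (θ(t₂) − θ(t₁)) ≤ −c (t₂ − t₁) θ(t₂)^{2m} for all 0 ≤ t₁ ≤ t₂ ≤ T. Then θ(t) ≤ e^{−ct} θ(0) for every t ∈ [0,T]. -/
/-!
Dividing the dissipation inequality by `(t₂ - t₁) θ(t₁)^(2m-1)` bounds the right difference
quotients of `θ` at `t₁` by `-c θ(t₂)^(2m) / θ(t₁)^(2m-1)`, which tends to `-c θ(t₁)` as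
`t₂ → t₁⁺` by continuity. So the lower right Dini derivative of `θ` is at most `-c θ`, and
Grönwall's inequality gives `θ(t) ≤ θ(0) e^(-ct)`.
-/

open Set Filter Topology

lemma pow_succ_div_pow_self (a : ℝ) (p : ℕ) : a ^ (p + 1) / a ^ p = a := by
  rcases eq_or_ne a 0 with rfl | ha
  · simp
  · rw [pow_succ, mul_div_cancel_left₀ _ (pow_ne_zero p ha)]

lemma frequently_slope_lt_of_eventually_slope_le {f g : ℝ → ℝ} {x r : ℝ}
    (hg : ContinuousWithinAt g (Ioi x) x)
    (hfg : ∀ᶠ z in 𝓝[>] x, (z - x)⁻¹ * (f z - f x) ≤ g z) (hr : g x < r) :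
    ∃ᶠ z in 𝓝[>] x, (z - x)⁻¹ * (f z - f x) < r :=
  (hfg.and (hg.eventually (gt_mem_nhds hr))).mono (fun _ hz ↦ hz.1.trans_lt hz.2) |>.frequently

lemma slope_le_of_pow_mul_sub_le {f : ℝ → ℝ} {c x z : ℝ} {p : ℕ} (hx : 0 ≤ f x) (hxz : x < z)
    (hzx : f z ≤ f x) (h : f x ^ p * (f z - f x) ≤ -c * (z - x) * f z ^ (p + 1)) :
    (z - x)⁻¹ * (f z - f x) ≤ -c * f z ^ (p + 1) / f x ^ p := by
  have hxz' : 0 < z - x := sub_pos.2 hxz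
  -- If `f x ^ p = 0`, the right side is the junk value `0`, and `hzx` alone gives the bound.
  rcases (pow_nonneg hx p).eq_or_lt with hp | hp
  · rw [← hp, div_zero]
    exact mul_nonpos_of_nonneg_of_nonpos (inv_nonneg.2 hxz'.le) (sub_nonpos.2 hzx)
  · rw [inv_mul_le_iff₀ hxz', ← mul_div_assoc, le_div_iff₀ hp]
    linear_combination h

theorem le_mul_exp_of_pow_mul_sub_le {f : ℝ → ℝ} {a b c : ℝ} (p : ℕ)
    (hf : ContinuousOn f (Icc a b)) (hf0 : ∀ x ∈ Icc a b, 0 ≤ f x)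
    (hanti : AntitoneOn f (Icc a b))
    (h : ∀ x z, a ≤ x → x < z → z ≤ b → f x ^ p * (f z - f x) ≤ -c * (z - x) * f z ^ (p + 1)) :
    ∀ x ∈ Icc a b, f x ≤ f a * Real.exp (-c * (x - a)) := by
  have hslope : ∀ x ∈ Ico a b, ∀ r, -c * f x < r →
      ∃ᶠ z in 𝓝[>] x, (z - x)⁻¹ * (f z - f x) < r := by
    intro x ⟨hax, hxb⟩ r hr
    have hxI : x ∈ Icc a b := ⟨hax, hxb.le⟩
    have hcont : ContinuousWithinAt (fun z ↦ -c * f z ^ (p + 1) / f x ^ p) (Ioi x) x :=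
      (((hf x hxI).mono_of_mem_nhdsWithin (Icc_mem_nhdsGT_of_mem ⟨hax, hxb⟩)).pow _
        |>.const_mul _).div_const _
    refine frequently_slope_lt_of_eventually_slope_le hcont ?_
      (by rwa [mul_div_assoc, pow_succ_div_pow_self])
    filter_upwards [Ioc_mem_nhdsGT hxb] with z ⟨hxz, hzb⟩
    exact slope_le_of_pow_mul_sub_le (hf0 x hxI) hxz
      (hanti hxI ⟨hax.trans hxz.le, hzb⟩ hxz.le) (h x z hax hxz hzb)
  intro x hx
  simpa only [gronwallBound_ε0, add_zero] using
    le_gronwallBound_of_liminf_deriv_right_le (K := -c) (ε := 0) hf hslope le_rfl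
      (fun _ _ ↦ (add_zero _).ge) x hx

theorem stmt_2_general (T : ℝ) (m : ℕ) (hm : 1 ≤ m) (c : ℝ)
    (θ : ℝ → ℝ) (hcont : ContinuousOn θ (Set.Icc 0 T))
    (hnonneg : ∀ t ∈ Set.Icc 0 T, 0 ≤ θ t)
    (hmono : AntitoneOn θ (Set.Icc 0 T))
    (hineq : ∀ t₁ t₂ : ℝ, 0 ≤ t₁ → t₁ ≤ t₂ → t₂ ≤ T →
      θ t₁ ^ (2 * m - 1) * (θ t₂ - θ t₁) ≤ -c * (t₂ - t₁) * θ t₂ ^ (2 * m)) :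
    ∀ t ∈ Set.Icc 0 T, θ t ≤ Real.exp (-c * t) * θ 0 := by
  have h2m : 2 * m - 1 + 1 = 2 * m := by omega
  intro t ht
  have := le_mul_exp_of_pow_mul_sub_le (2 * m - 1) hcont hnonneg hmono
    (fun x z hx hxz hz ↦ h2m ▸ hineq x z hx hxz.le hz) t ht
  rwa [sub_zero, mul_comm] at this

/-- Lemma on non-increasing functions satisfying a power-type dissipation inequality:
exponential decay. -/
theorem stmt_2 (T : ℝ) (hT : 0 < T) (m : ℕ) (hm : 1 ≤ m) (c : ℝ) (hc : 0 < c)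
    (θ : ℝ → ℝ) (hcont : ContinuousOn θ (Set.Icc 0 T))
    (hnonneg : ∀ t ∈ Set.Icc 0 T, 0 ≤ θ t)
    (hmono : AntitoneOn θ (Set.Icc 0 T))
    (hineq : ∀ t₁ t₂ : ℝ, 0 ≤ t₁ → t₁ ≤ t₂ → t₂ ≤ T →
      θ t₁ ^ (2 * m - 1) * (θ t₂ - θ t₁) ≤ -c * (t₂ - t₁) * θ t₂ ^ (2 * m)) :
    ∀ t ∈ Set.Icc 0 T, θ t ≤ Real.exp (-c * t) * θ 0 :=
  stmt_2_general T m hm c θ hcont hnonneg hmono hineq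
end

section
/- Let T > 0, let c > 0, and let V : [0,T] → [0,∞) be continuous. Assume that for every nonnegative continuously differentiable function φ with compact support contained in the open interval (0,T), one has ∫_0^T V(t) φ'(t) dt ≥ c ∫_0^T V(t) φ(t) dt. Then V(t) ≤ V(0) e^{−ct} for every t ∈ [0,T]. -/
/-!
Put `W x = exp (c * x) * V x`. Testing the hypothesis against `exp (c * x) * ψ x` gives
`∫ W ψ' ≥ 0` for every nonnegative test function `ψ`, i.e. `W' ≤ 0` in the sense of
distributions. For `ψ` the difference of two `smoothTransition` ramps of width `ε` starting at
`s < t`, `ψ'` is the difference of two mollifiers concentrated near `s` and `t`, so `∫ W ψ'`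
tends to `W s - W t` as `ε → 0`. Hence `W` is antitone and `W t ≤ W 0`.
-/

open MeasureTheory Real Set Filter Topology

noncomputable def transitionBump : ℝ → ℝ := deriv smoothTransition

lemma hasDerivAt_smoothTransition (x : ℝ) : HasDerivAt smoothTransition (transitionBump x) x :=
  ((smoothTransition.contDiff (n := 1)).differentiable one_ne_zero x).hasDerivAt

lemma continuous_transitionBump : Continuous transitionBump :=
  smoothTransition.contDiff.continuous_deriv (n := 1) le_rfl

lemma transitionBump_eq_zero {x : ℝ} (hx : x ∉ Icc 0 1) : transitionBump x = 0 := by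
  simp only [mem_Icc, not_and_or, not_le] at hx
  rcases hx with hx | hx
  · have : smoothTransition =ᶠ[𝓝 x] fun _ ↦ 0 :=
      (eventually_lt_nhds hx).mono fun y hy ↦ smoothTransition.zero_of_nonpos hy.le
    simpa [transitionBump] using this.deriv_eq
  · have : smoothTransition =ᶠ[𝓝 x] fun _ ↦ 1 :=
      (eventually_gt_nhds hx).mono fun y hy ↦ smoothTransition.one_of_one_le hy.le
    simpa [transitionBump] using this.deriv_eq

lemma hasCompactSupport_transitionBump : HasCompactSupport transitionBump :=
  .intro isCompact_Icc fun _ ↦ transitionBump_eq_zero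

lemma integral_transitionBump : ∫ x, transitionBump x = 1 := by
  have hbot : Tendsto smoothTransition atBot (𝓝 0) :=
    tendsto_const_nhds.congr' <| (eventually_le_atBot 0).mono fun x hx ↦
      (smoothTransition.zero_of_nonpos hx).symm
  have htop : Tendsto smoothTransition atTop (𝓝 1) :=
    tendsto_const_nhds.congr' <| (eventually_ge_atTop 1).mono fun x hx ↦
      (smoothTransition.one_of_one_le hx).symm
  simpa using integral_of_hasDerivAt_of_tendsto hasDerivAt_smoothTransition
    (continuous_transitionBump.integrable_of_hasCompactSupport hasCompactSupport_transitionBump)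
    hbot htop

section
variable {W ρ : ℝ → ℝ}

lemma integral_mul_comp_sub_div (a : ℝ) {ε : ℝ} (hε : ε ≠ 0) :
    ∫ x, W x * ρ ((x - a) / ε) = |ε| * ∫ u, W (a + ε * u) * ρ u := by
  rw [← integral_add_left_eq_self _ a, ← smul_eq_mul, ← Measure.integral_comp_div _ ε]
  simp [mul_div_cancel₀ _ hε]

lemma HasCompactSupport.comp_sub_div (hρ : HasCompactSupport ρ) (a : ℝ) {ε : ℝ} (hε : ε ≠ 0) :
    HasCompactSupport fun x ↦ ρ ((x - a) / ε) := by
  simpa [Function.comp_def, div_eq_mul_inv] using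
    hρ.comp_homeomorph ((Homeomorph.subRight a).trans (Homeomorph.mulRight₀ ε⁻¹ (inv_ne_zero hε)))

lemma continuous_integral_comp_add_mul (hW : Continuous W) (hρ : Continuous ρ)
    (hρc : HasCompactSupport ρ) :
    Continuous fun p : ℝ × ℝ ↦ ∫ u, W (p.1 + p.2 * u) * ρ u := by
  have hoff (p : ℝ × ℝ) :
      ∫ u in tsupport ρ, W (p.1 + p.2 * u) * ρ u = ∫ u, W (p.1 + p.2 * u) * ρ u :=
    setIntegral_eq_integral_of_forall_compl_eq_zero fun u hu ↦ by
      simp [image_eq_zero_of_notMem_tsupport hu]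
  simp_rw [← hoff]
  exact continuous_parametric_integral_of_continuous (by fun_prop) hρc
end

noncomputable def smoothRamp (s t ε x : ℝ) : ℝ :=
  smoothTransition ((x - s) / ε) - smoothTransition ((x - t) / ε)

section
variable {s t ε : ℝ}

lemma contDiff_smoothRamp {n : ℕ∞} : ContDiff ℝ n (smoothRamp s t ε) := by
  unfold smoothRamp; fun_prop

lemma smoothRamp_nonneg (hε : 0 ≤ ε) (hst : s ≤ t) (x : ℝ) : 0 ≤ smoothRamp s t ε x :=
  sub_nonneg.2 <| smoothTransition.monotone <| by gcongr

lemma tsupport_smoothRamp_subset (hε : 0 < ε) (hst : s ≤ t) :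
    tsupport (smoothRamp s t ε) ⊆ Icc s (t + ε) := by
  refine closure_minimal (fun x hx ↦ ?_) isClosed_Icc
  by_contra hx'
  simp only [mem_Icc, not_and_or, not_le] at hx'
  refine hx ?_
  rcases hx' with hx' | hx'
  · simp [smoothRamp, smoothTransition.zero_of_nonpos, div_nonpos_of_nonpos_of_nonneg, hε.le,
      hx'.le, (hx'.trans_le hst).le]
  · have hs : 1 ≤ (x - s) / ε := (le_div_iff₀ hε).2 (by linarith)
    have ht : 1 ≤ (x - t) / ε := (le_div_iff₀ hε).2 (by linarith)
    simp [smoothRamp, smoothTransition.one_of_one_le, hs, ht]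

lemma hasCompactSupport_smoothRamp (hε : 0 < ε) (hst : s ≤ t) :
    HasCompactSupport (smoothRamp s t ε) :=
  isCompact_Icc.of_isClosed_subset (isClosed_tsupport _) (tsupport_smoothRamp_subset hε hst)

lemma hasDerivAt_smoothRamp (x : ℝ) :
    HasDerivAt (smoothRamp s t ε)
      (transitionBump ((x - s) / ε) / ε - transitionBump ((x - t) / ε) / ε) x := by
  have hs := (hasDerivAt_smoothTransition ((x - s) / ε)).comp x
    (((hasDerivAt_id x).sub_const s).div_const ε)
  have ht := (hasDerivAt_smoothTransition ((x - t) / ε)).comp x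
    (((hasDerivAt_id x).sub_const t).div_const ε)
  exact (hs.sub ht).congr_deriv (by ring)

lemma integral_mul_deriv_smoothRamp {W : ℝ → ℝ} (hW : Continuous W) (hε : 0 < ε) :
    ∫ x, W x * deriv (smoothRamp s t ε) x =
      (∫ u, W (s + ε * u) * transitionBump u) - ∫ u, W (t + ε * u) * transitionBump u := by
  have hint : ∀ a, Integrable fun x ↦ W x * transitionBump ((x - a) / ε) / ε := fun a ↦
    ((hW.mul (continuous_transitionBump.comp (by fun_prop))).integrable_of_hasCompactSupport
      ((hasCompactSupport_transitionBump.comp_sub_div a hε.ne').mul_left)).div_const ε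
  simp_rw [(hasDerivAt_smoothRamp _).deriv, mul_sub, ← mul_div_assoc]
  rw [integral_sub (hint s) (hint t), integral_div, integral_div,
    integral_mul_comp_sub_div s hε.ne', integral_mul_comp_sub_div t hε.ne', abs_of_pos hε]
  field_simp
end

theorem antitoneOn_of_integral_mul_deriv_nonneg {W : ℝ → ℝ} (hW : Continuous W) {a b : ℝ}
    (H : ∀ ψ : ℝ → ℝ, ContDiff ℝ 1 ψ → (∀ x, 0 ≤ ψ x) → HasCompactSupport ψ →
      tsupport ψ ⊆ Ioo a b → 0 ≤ ∫ x, W x * deriv ψ x) :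
    AntitoneOn W (Icc a b) := by
  intro s hs t ht hst
  rcases hst.eq_or_lt with rfl | hst
  · rfl
  set A : ℝ × ℝ → ℝ := fun p ↦ ∫ u, W (p.1 + p.2 * u) * transitionBump u
  have hA : Continuous A :=
    continuous_integral_comp_add_mul hW continuous_transitionBump hasCompactSupport_transitionBump
  have hA_zero (x : ℝ) : A (x, 0) = W x := by
    simp [A, integral_const_mul, integral_transitionBump]
  have hA_lim (x k : ℝ) : Tendsto (fun ε ↦ A (x + k * ε, ε)) (𝓝[>] 0) (𝓝 (W x)) := by
    rw [← hA_zero]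
    exact ((hA.comp (by fun_prop)).tendsto' 0 _ (by simp)).mono_left nhdsWithin_le_nhds
  -- The ramp from `s + ε` to `t - 2ε` is supported in `[s + ε, t - ε]`, inside `(a, b)` even
  -- when `s = a` or `t = b`.
  refine le_of_tendsto_of_tendsto (hA_lim t (-2)) (hA_lim s 1) ?_
  filter_upwards [Ioo_mem_nhdsGT (show 0 < (t - s) / 3 by linarith)] with ε ⟨hε, hεst⟩
  have hst' : s + 1 * ε ≤ t + -2 * ε := by linarith
  have hsupp : tsupport (smoothRamp (s + 1 * ε) (t + -2 * ε) ε) ⊆ Ioo a b :=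
    (tsupport_smoothRamp_subset hε hst').trans fun x hx ↦
      ⟨by linarith [hs.1, hx.1], by linarith [ht.2, hx.2]⟩
  have hramp := H _ contDiff_smoothRamp (smoothRamp_nonneg hε.le hst')
    (hasCompactSupport_smoothRamp hε hst') hsupp
  rwa [integral_mul_deriv_smoothRamp hW hε, sub_nonneg] at hramp

theorem antitoneOn_of_setIntegral_mul_deriv_nonneg {W : ℝ → ℝ} {a b : ℝ}
    (hW : ContinuousOn W (Icc a b))
    (H : ∀ ψ : ℝ → ℝ, ContDiff ℝ 1 ψ → (∀ x, 0 ≤ ψ x) → HasCompactSupport ψ →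
      tsupport ψ ⊆ Ioo a b → 0 ≤ ∫ x in Ioo a b, W x * deriv ψ x) :
    AntitoneOn W (Icc a b) := by
  rcases lt_or_ge b a with hba | hab
  · simp [AntitoneOn, Icc_eq_empty_of_lt hba]
  obtain ⟨W', hW'_cont, hW'_eq⟩ : ∃ W' : ℝ → ℝ, Continuous W' ∧ EqOn W' W (Icc a b) :=
    ⟨IccExtend hab ((Icc a b).domRestrict W), continuous_IccExtend_iff.2 hW.domRestrict,
      fun x hx ↦ IccExtend_of_mem hab _ hx⟩
  refine (antitoneOn_of_integral_mul_deriv_nonneg hW'_cont fun ψ h1 h2 h3 h4 ↦ ?_).congr hW'_eq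
  have hderiv : ∀ x ∉ Ioo a b, W' x * deriv ψ x = 0 := fun x hx ↦ by
    rw [Function.notMem_support.1 fun h ↦ hx (h4 (support_deriv_subset h)), mul_zero]
  rw [← setIntegral_eq_integral_of_forall_compl_eq_zero hderiv,
    setIntegral_congr_fun measurableSet_Ioo fun x hx ↦ by rw [hW'_eq (Ioo_subset_Icc_self hx)]]
  exact H ψ h1 h2 h3 h4

lemma setIntegral_mul_deriv_exp_mul {V ψ : ℝ → ℝ} {a b : ℝ} (c : ℝ)
    (hV : ContinuousOn V (Icc a b)) (hψ : ContDiff ℝ 1 ψ) :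
    ∫ x in Ioo a b, V x * deriv (fun x ↦ exp (c * x) * ψ x) x =
      c * (∫ x in Ioo a b, V x * (exp (c * x) * ψ x)) +
        ∫ x in Ioo a b, exp (c * x) * V x * deriv ψ x := by
  have hderiv (x : ℝ) :
      deriv (fun x ↦ exp (c * x) * ψ x) x = c * (exp (c * x) * ψ x) + exp (c * x) * deriv ψ x := by
    have : HasDerivAt (fun x ↦ exp (c * x) * ψ x)
        (c * (exp (c * x) * ψ x) + exp (c * x) * deriv ψ x) x :=
      (((hasDerivAt_exp _).comp x ((hasDerivAt_id x).const_mul c)).mul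
        (hψ.differentiable one_ne_zero x).hasDerivAt).congr_deriv (by simp; ring)
    exact this.deriv
  have hint {f : ℝ → ℝ} (hf : Continuous f) : IntegrableOn (fun x ↦ V x * f x) (Ioo a b) :=
    ((hV.mul hf.continuousOn).integrableOn_Icc).mono_set Ioo_subset_Icc_self
  have h1 := hint (f := fun x ↦ exp (c * x) * ψ x) (by fun_prop)
  have h2 := hint (f := fun x ↦ exp (c * x) * deriv ψ x) (by fun_prop)
  calc ∫ x in Ioo a b, V x * deriv (fun x ↦ exp (c * x) * ψ x) x
      = ∫ x in Ioo a b, (c * (V x * (exp (c * x) * ψ x)) + V x * (exp (c * x) * deriv ψ x)) := by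
        congr 1; ext x; rw [hderiv]; ring
    _ = _ := by
        rw [integral_add (h1.const_mul c) h2, integral_const_mul]
        congr 2; ext x; ring

theorem stmt_10_general (T : ℝ) (c : ℝ)
    (V : ℝ → ℝ) (hcont : ContinuousOn V (Set.Icc 0 T))
    (hineq : ∀ φ : ℝ → ℝ, ContDiff ℝ 1 φ → (∀ t, 0 ≤ φ t) →
      HasCompactSupport φ → tsupport φ ⊆ Set.Ioo 0 T →
      c * ∫ t in Set.Ioo 0 T, V t * φ t ≤ ∫ t in Set.Ioo 0 T, V t * deriv φ t) :
    ∀ t ∈ Set.Icc 0 T, V t ≤ V 0 * Real.exp (-c * t) := by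
  have hW : AntitoneOn (fun x ↦ exp (c * x) * V x) (Icc 0 T) := by
    refine antitoneOn_of_setIntegral_mul_deriv_nonneg (by fun_prop) fun ψ h1 h2 h3 h4 ↦ ?_
    have := hineq (fun x ↦ exp (c * x) * ψ x) (by fun_prop)
      (fun x ↦ mul_nonneg (exp_nonneg _) (h2 x)) h3.mul_left (tsupport_mul_subset_right.trans h4)
    rw [setIntegral_mul_deriv_exp_mul c hcont h1] at this
    linarith
  intro t ht
  have hWt : exp (c * t) * V t ≤ V 0 := by
    simpa using hW ⟨le_rfl, ht.1.trans ht.2⟩ ht ht.1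
  calc V t = exp (-c * t) * (exp (c * t) * V t) := by rw [← mul_assoc, ← exp_add]; simp
    _ ≤ exp (-c * t) * V 0 := by gcongr
    _ = V 0 * exp (-c * t) := mul_comm _ _

/-- A distributional Grönwall-type lemma: if `∫ V φ' ≥ c ∫ V φ` for all nonnegative
`φ ∈ C_c^1((0,T))`, then `V(t) ≤ V(0) e^{−ct}` on `[0,T]`. -/
theorem stmt_10 (T : ℝ) (hT : 0 < T) (c : ℝ) (hc : 0 < c)
    (V : ℝ → ℝ) (hcont : ContinuousOn V (Set.Icc 0 T))
    (hnonneg : ∀ t ∈ Set.Icc 0 T, 0 ≤ V t)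
    (hineq : ∀ φ : ℝ → ℝ, ContDiff ℝ 1 φ → (∀ t, 0 ≤ φ t) →
      HasCompactSupport φ → tsupport φ ⊆ Set.Ioo 0 T →
      c * ∫ t in Set.Ioo 0 T, V t * φ t ≤ ∫ t in Set.Ioo 0 T, V t * deriv φ t) :
    ∀ t ∈ Set.Icc 0 T, V t ≤ V 0 * Real.exp (-c * t) :=
  stmt_10_general T c V hcont hineq
end

section
/- Let T > 0, let c ≥ 0, and let F : [0,T] → ℝ be continuous. Assume that for every nonnegative continuously differentiable function φ with compact support contained in the open interval (0,T), one has ∫_0^T F(t) φ'(t) dt ≥ c ∫_0^T F(t) φ(t) dt. Then for all 0 ≤ t₁ ≤ t₂ ≤ T one has F(t₂) − F(t₁) ≤ −c ∫_{t₁}^{t₂} F(t) dt. -/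
/-!
Test the hypothesis with smooth plateaus `φ_r` that rise from `0` to `1` at scale `1 / r` just to
the right of `t₁` and fall back just to the left of `t₂`. As `r → ∞`, `φ_r` tends to the indicator
of `(t₁, t₂]`, so `∫ F φ_r → ∫_{t₁}^{t₂} F` by dominated convergence, while `φ_r'` splits into two
nonnegative peaks of mass one, concentrating at `t₁` from the right and at `t₂` from the left.
Being one-sided, they see only `F` on `[0, T]`, whose continuity there gives
`∫ F φ_r' → F t₁ - F t₂`. Letting `r → ∞` in `c ∫ F φ_r ≤ ∫ F φ_r'` proves the claim.
-/

open MeasureTheory Filter Set Topology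

namespace Real.smoothTransition

theorem deriv_nonneg (y : ℝ) : 0 ≤ deriv smoothTransition y :=
  smoothTransition.monotone.deriv_nonneg

theorem deriv_eq_zero_of_notMem_Ioo {y : ℝ} (hy : y ∉ Ioo 0 1) :
    deriv smoothTransition y = 0 := by
  rcases le_or_gt y 0 with hy0 | hy0
  · refine IsLocalMin.deriv_eq_zero (Eventually.of_forall fun x => ?_)
    simpa [zero_of_nonpos hy0] using nonneg x
  · refine IsLocalMax.deriv_eq_zero (Eventually.of_forall fun x => ?_)
    simpa [one_of_one_le (not_lt.1 fun h => hy ⟨hy0, h⟩)] using le_one x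

end Real.smoothTransition

open Real

noncomputable def smoothStep (x₀ α r x : ℝ) : ℝ := smoothTransition (r * (x - x₀) - α)

section smoothStep

variable {x₀ α r x : ℝ}

theorem contDiff_smoothStep {n : ℕ∞} : ContDiff ℝ n (smoothStep x₀ α r) :=
  smoothTransition.contDiff.comp (by fun_prop)

theorem hasDerivAt_smoothStep :
    HasDerivAt (smoothStep x₀ α r) (r * deriv smoothTransition (r * (x - x₀) - α)) x := by
  have hinner : HasDerivAt (fun x => r * (x - x₀) - α) r x := by
    simpa using (((hasDerivAt_id x).sub_const x₀).const_mul r).sub_const α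
  rw [mul_comm]
  exact (smoothTransition.contDiff.differentiable one_ne_zero _).hasDerivAt.comp x hinner

theorem continuous_deriv_smoothStep : Continuous (deriv (smoothStep x₀ α r)) :=
  (contDiff_smoothStep (n := 1)).continuous_deriv le_rfl

theorem smoothStep_eq_zero (h : r * (x - x₀) ≤ α) : smoothStep x₀ α r x = 0 :=
  smoothTransition.zero_of_nonpos (by linarith)

theorem smoothStep_eq_one (h : α + 1 ≤ r * (x - x₀)) : smoothStep x₀ α r x = 1 :=
  smoothTransition.one_of_one_le (by linarith)

theorem deriv_smoothStep_nonneg (hr : 0 ≤ r) : 0 ≤ deriv (smoothStep x₀ α r) x := by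
  rw [hasDerivAt_smoothStep.deriv]
  exact mul_nonneg hr (smoothTransition.deriv_nonneg _)

theorem deriv_smoothStep_eq_zero (h : 1 + |α| ≤ r * |x - x₀|) :
    deriv (smoothStep x₀ α r) x = 0 := by
  rw [hasDerivAt_smoothStep.deriv, smoothTransition.deriv_eq_zero_of_notMem_Ioo, mul_zero]
  rintro ⟨h0, h1⟩
  rcases abs_cases (x - x₀) with ⟨hx, hx'⟩ | ⟨hx, hx'⟩ <;>
  rcases abs_cases α with ⟨hα, hα'⟩ | ⟨hα, hα'⟩ <;>
  rw [hx, hα] at h <;> linarith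

theorem tendsto_smoothStep (hx : x ≠ x₀) :
    Tendsto (fun r => smoothStep x₀ α r x) atTop (𝓝 ((Ioi x₀).indicator 1 x)) := by
  rcases hx.lt_or_gt with hx | hx
  · have : Tendsto (fun r => r * (x - x₀)) atTop atBot :=
      tendsto_id.atTop_mul_const_of_neg (sub_neg.2 hx)
    rw [indicator_of_notMem (s := Ioi x₀) (not_lt.2 hx.le)]
    refine tendsto_const_nhds.congr' ?_
    filter_upwards [this.eventually_le_atBot α] with r hr
    exact (smoothStep_eq_zero hr).symm
  · have : Tendsto (fun r => r * (x - x₀)) atTop atTop :=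
      tendsto_id.atTop_mul_const (sub_pos.2 hx)
    rw [indicator_of_mem (mem_Ioi.2 hx), Pi.one_apply]
    refine tendsto_const_nhds.congr' ?_
    filter_upwards [this.eventually_ge_atTop (α + 1)] with r hr
    exact (smoothStep_eq_one hr).symm

theorem integral_Icc_deriv_smoothStep {a b : ℝ} (hab : a ≤ b) :
    ∫ x in Icc a b, deriv (smoothStep x₀ α r) x = smoothStep x₀ α r b - smoothStep x₀ α r a := by
  rw [integral_Icc_eq_integral_Ioc, ← intervalIntegral.integral_of_le hab]
  exact intervalIntegral.integral_deriv_eq_sub (fun x _ => hasDerivAt_smoothStep.differentiableAt)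
    (continuous_deriv_smoothStep.intervalIntegrable a b)

theorem tendsto_setIntegral_mul_deriv_smoothStep {f : ℝ → ℝ} {a b : ℝ}
    (hf : ContinuousOn f (Icc a b)) (hx₀ : x₀ ∈ Icc a b)
    (hmass : Tendsto (fun r => smoothStep x₀ α r b - smoothStep x₀ α r a) atTop (𝓝 1)) :
    Tendsto (fun r => ∫ x in Icc a b, f x * deriv (smoothStep x₀ α r) x) atTop (𝓝 (f x₀)) := by
  simp_rw [mul_comm (f _)]
  refine tendsto_setIntegral_peak_smul_of_integrableOn_of_tendsto measurableSet_Icc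
    measurableSet_Icc subset_rfl self_mem_nhdsWithin measure_Icc_lt_top.ne
    ((eventually_ge_atTop 0).mono fun r hr x _ => deriv_smoothStep_nonneg hr) ?_ ?_
    (Eventually.of_forall fun r => continuous_deriv_smoothStep.aestronglyMeasurable)
    hf.integrableOn_Icc (hf x₀ hx₀)
  · intro u hu hx₀u
    obtain ⟨δ, hδ, hball⟩ := Metric.isOpen_iff.1 hu x₀ hx₀u
    refine Metric.tendstoUniformlyOn_iff.2 fun ε hε => ?_
    filter_upwards [(tendsto_id.atTop_mul_const hδ).eventually_ge_atTop (1 + |α|),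
      eventually_ge_atTop 0] with r (hr : 1 + |α| ≤ r * δ) hr0 x hx
    have hδx : δ ≤ |x - x₀| := by
      simpa [Metric.mem_ball, Real.dist_eq] using fun h => hx.2 (hball h)
    rw [deriv_smoothStep_eq_zero (hr.trans (mul_le_mul_of_nonneg_left hδx hr0))]
    simpa using hε
  · refine hmass.congr' ?_
    filter_upwards with r
    exact (integral_Icc_deriv_smoothStep (hx₀.1.trans hx₀.2)).symm

end smoothStep

/-- The rise is on `[t₁ + 1 / r, t₁ + 2 / r]` and the fall on `[t₂ - 2 / r, t₂ - 1 / r]`, so both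
stay inside `[t₁, t₂]` and `φ_r` is a legitimate test function even when `t₁ = 0` or `t₂ = T`. -/
noncomputable def smoothPlateau (t₁ t₂ r : ℝ) : ℝ → ℝ := smoothStep t₁ 1 r - smoothStep t₂ (-2) r

section smoothPlateau

variable {t₁ t₂ r x : ℝ}

theorem contDiff_smoothPlateau {n : ℕ∞} : ContDiff ℝ n (smoothPlateau t₁ t₂ r) :=
  contDiff_smoothStep.sub contDiff_smoothStep

theorem deriv_smoothPlateau :
    deriv (smoothPlateau t₁ t₂ r) x =
      deriv (smoothStep t₁ 1 r) x - deriv (smoothStep t₂ (-2) r) x :=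
  deriv_sub hasDerivAt_smoothStep.differentiableAt hasDerivAt_smoothStep.differentiableAt

theorem smoothPlateau_nonneg (h : 3 ≤ r * (t₂ - t₁)) : 0 ≤ smoothPlateau t₁ t₂ r x :=
  sub_nonneg.2 (smoothTransition.monotone (by linarith))

theorem smoothPlateau_le_one : smoothPlateau t₁ t₂ r x ≤ 1 := by
  simp only [smoothPlateau, smoothStep, Pi.sub_apply]
  linarith [smoothTransition.le_one (r * (x - t₁) - 1), smoothTransition.nonneg (r * (x - t₂) - -2)]

theorem smoothPlateau_eq_zero (hr : 0 < r) (h : 3 ≤ r * (t₂ - t₁))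
    (hx : x ∉ Icc (t₁ + r⁻¹) (t₂ - r⁻¹)) : smoothPlateau t₁ t₂ r x = 0 := by
  simp only [mem_Icc, not_and_or, not_le] at hx
  rw [smoothPlateau, Pi.sub_apply, sub_eq_zero]
  rcases hx with hx | hx
  · have hrx := (lt_inv_mul_iff₀ hr).1 (by linarith : x - t₁ < r⁻¹ * 1)
    rw [smoothStep_eq_zero (by linarith), smoothStep_eq_zero (by linarith)]
  · have hrx := (inv_mul_lt_iff₀ hr).1 (by linarith : r⁻¹ * (-1) < x - t₂)
    rw [smoothStep_eq_one (by linarith), smoothStep_eq_one (by linarith)]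

theorem tsupport_smoothPlateau_subset (hr : 0 < r) (h : 3 ≤ r * (t₂ - t₁)) :
    tsupport (smoothPlateau t₁ t₂ r) ⊆ Icc (t₁ + r⁻¹) (t₂ - r⁻¹) :=
  closure_minimal (Function.support_subset_iff'.2 fun _ hx => smoothPlateau_eq_zero hr h hx)
    isClosed_Icc

theorem tendsto_smoothPlateau (h : t₁ ≤ t₂) (hx₁ : x ≠ t₁) (hx₂ : x ≠ t₂) :
    Tendsto (fun r => smoothPlateau t₁ t₂ r x) atTop (𝓝 ((Ioc t₁ t₂).indicator 1 x)) := by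
  rw [← Ioi_sdiff_Ioi, indicator_sdiff (Ioi_subset_Ioi h)]
  exact (tendsto_smoothStep hx₁).sub (tendsto_smoothStep hx₂)

theorem tendsto_setIntegral_mul_smoothPlateau {f : ℝ → ℝ} {s : Set ℝ} (hf : IntegrableOn f s)
    (h : t₁ < t₂) :
    Tendsto (fun r => ∫ x in s, f x * smoothPlateau t₁ t₂ r x) atTop
      (𝓝 (∫ x in s ∩ Ioc t₁ t₂, f x)) := by
  rw [← setIntegral_indicator measurableSet_Ioc]
  refine tendsto_integral_filter_of_dominated_convergence (fun x => ‖f x‖)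
    (Eventually.of_forall fun r => hf.aestronglyMeasurable.mul
      (contDiff_smoothPlateau (n := 0)).continuous.aestronglyMeasurable) ?_ hf.norm ?_
  · filter_upwards [(tendsto_id.atTop_mul_const (sub_pos.2 h)).eventually_ge_atTop 3]
      with r (hr : 3 ≤ r * (t₂ - t₁))
    refine Eventually.of_forall fun x => ?_
    rw [norm_mul, Real.norm_of_nonneg (smoothPlateau_nonneg hr)]
    exact mul_le_of_le_one_right (norm_nonneg _) smoothPlateau_le_one
  · filter_upwards [Measure.ae_ne _ t₁, Measure.ae_ne _ t₂] with x hx₁ hx₂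
    have := (tendsto_smoothPlateau h.le hx₁ hx₂).const_mul (f x)
    simpa only [← indicator_mul_right, Pi.one_apply, mul_one] using this

theorem tendsto_setIntegral_mul_deriv_smoothPlateau {f : ℝ → ℝ} {a b : ℝ}
    (hf : ContinuousOn f (Icc a b)) (ha : a ≤ t₁) (h : t₁ < t₂) (hb : t₂ ≤ b) :
    Tendsto (fun r => ∫ x in Icc a b, f x * deriv (smoothPlateau t₁ t₂ r) x) atTop
      (𝓝 (f t₁ - f t₂)) := by
  have hint : ∀ x₀ α r, IntegrableOn (fun x => f x * deriv (smoothStep x₀ α r) x) (Icc a b) :=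
    fun _ _ _ => (hf.mul continuous_deriv_smoothStep.continuousOn).integrableOn_Icc
  have hmass₁ : Tendsto (fun r => smoothStep t₁ 1 r b - smoothStep t₁ 1 r a) atTop (𝓝 1) := by
    refine tendsto_const_nhds.congr' ?_
    filter_upwards [eventually_ge_atTop 0,
      (tendsto_id.atTop_mul_const (sub_pos.2 (h.trans_le hb))).eventually_ge_atTop 2]
      with r hr (hrb : 2 ≤ r * (b - t₁))
    rw [smoothStep_eq_one (by linarith), smoothStep_eq_zero (by nlinarith), sub_zero]
  have hmass₂ :
      Tendsto (fun r => smoothStep t₂ (-2) r b - smoothStep t₂ (-2) r a) atTop (𝓝 1) := by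
    refine tendsto_const_nhds.congr' ?_
    filter_upwards [eventually_ge_atTop 0,
      (tendsto_id.atTop_mul_const (sub_pos.2 (ha.trans_lt h))).eventually_ge_atTop 2]
      with r hr (hra : 2 ≤ r * (t₂ - a))
    rw [smoothStep_eq_one (by nlinarith), smoothStep_eq_zero (by linarith), sub_zero]
  refine ((tendsto_setIntegral_mul_deriv_smoothStep hf ⟨ha, h.le.trans hb⟩ hmass₁).sub
    (tendsto_setIntegral_mul_deriv_smoothStep hf ⟨ha.trans h.le, hb⟩ hmass₂)).congr fun r => ?_
  simp_rw [deriv_smoothPlateau, mul_sub]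
  exact (integral_sub (hint _ _ _) (hint _ _ _)).symm

end smoothPlateau

theorem stmt_11_general (T : ℝ) (c : ℝ)
    (F : ℝ → ℝ) (hcont : ContinuousOn F (Set.Icc 0 T))
    (hineq : ∀ φ : ℝ → ℝ, ContDiff ℝ 1 φ → (∀ t, 0 ≤ φ t) →
      HasCompactSupport φ → tsupport φ ⊆ Set.Ioo 0 T →
      c * ∫ t in Set.Ioo 0 T, F t * φ t ≤ ∫ t in Set.Ioo 0 T, F t * deriv φ t) :
    ∀ t₁ t₂ : ℝ, 0 ≤ t₁ → t₁ ≤ t₂ → t₂ ≤ T →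
      F t₂ - F t₁ ≤ -c * ∫ t in t₁..t₂, F t := by
  intro t₁ t₂ ht₁ h₁₂ ht₂
  rcases h₁₂.eq_or_lt with rfl | h₁₂
  · simp
  simp_rw [← integral_Icc_eq_integral_Ioo] at hineq
  have htest : ∀ᶠ r in atTop, c * ∫ t in Icc 0 T, F t * smoothPlateau t₁ t₂ r t ≤
      ∫ t in Icc 0 T, F t * deriv (smoothPlateau t₁ t₂ r) t := by
    filter_upwards [eventually_gt_atTop 0,
      (tendsto_id.atTop_mul_const (sub_pos.2 h₁₂)).eventually_ge_atTop 3]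
      with r hr (h3 : 3 ≤ r * (t₂ - t₁))
    have hsupp := tsupport_smoothPlateau_subset hr h3
    refine hineq _ contDiff_smoothPlateau (fun _ => smoothPlateau_nonneg h3)
      (isCompact_Icc.of_isClosed_subset (isClosed_tsupport _) hsupp) (hsupp.trans ?_)
    have hr' := inv_pos.2 hr
    exact Icc_subset_Ioo (by linarith) (by linarith)
  have hlhs := (tendsto_setIntegral_mul_smoothPlateau hcont.integrableOn_Icc h₁₂).const_mul c
  rw [inter_eq_right.2 (Ioc_subset_Icc_self.trans (Icc_subset_Icc ht₁ ht₂)),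
    ← intervalIntegral.integral_of_le h₁₂.le] at hlhs
  have hlim := le_of_tendsto_of_tendsto hlhs
    (tendsto_setIntegral_mul_deriv_smoothPlateau hcont ht₁ h₁₂ ht₂) htest
  linarith

/-- If `∫ F φ' ≥ c ∫ F φ` for all nonnegative `φ ∈ C_c^1((0,T))`, then
`F(t₂) − F(t₁) ≤ −c ∫_{t₁}^{t₂} F`. -/
theorem stmt_11 (T : ℝ) (hT : 0 < T) (c : ℝ) (hc : 0 ≤ c)
    (F : ℝ → ℝ) (hcont : ContinuousOn F (Set.Icc 0 T))
    (hineq : ∀ φ : ℝ → ℝ, ContDiff ℝ 1 φ → (∀ t, 0 ≤ φ t) →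
      HasCompactSupport φ → tsupport φ ⊆ Set.Ioo 0 T →
      c * ∫ t in Set.Ioo 0 T, F t * φ t ≤ ∫ t in Set.Ioo 0 T, F t * deriv φ t) :
    ∀ t₁ t₂ : ℝ, 0 ≤ t₁ → t₁ ≤ t₂ → t₂ ≤ T →
      F t₂ - F t₁ ≤ -c * ∫ t in t₁..t₂, F t :=
  stmt_11_general T c F hcont hineq
end
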